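/- arXiv:0710.0436 — 6 statements merged into one kernel-verified Lean document; each statement's English description precedes it below -/
import Mathlib

section
/- Let m, n ≥ 1, let a be an n×m real matrix with a_{ij} ≥ 0 such that for each column j there exists a row i with a_{ij} > 0, and let r > 0. If a pair (u, v) with u_i ≥ 0, v_i ≥ 0 for all i, ∑_{i=1}^n u_i² = r and ∑_{i=1}^n v_i² = r maximizes l̄(u,v) = ∏_{j=1}^m ∑_{i=1}^n u_i v_i a_{ij} over all such pairs, then u_i = v_i for every i. (Theorem 1) -/
/-!
The maximum is positive (compare with a constant vector), so every factor of the likelihood at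
`(u, v)` is positive. Replacing `u` and `v` by their coordinatewise quadratic mean
`w i = √((u i ² + v i ²) / 2)` keeps both constraints, and `u i v i ≤ w i ²` with equality iff
`u i = v i`, so every factor weakly increases and the one through a column with `a k j > 0`
strictly increases once `u k ≠ v k`. On a row with `a k · = 0` a maximizer puts no mass: deleting
`u k` keeps the likelihood, and rescaling the rest back onto the sphere multiplies it by `c ^ m`
with `c > 1`.
-/

open Finset

section

variable {ι κ : Type*} [Fintype ι] [Fintype κ]

def likelihood (a : ι → κ → ℝ) (u v : ι → ℝ) : ℝ := ∏ j, ∑ i, u i * v i * a i j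

lemma likelihood_comm (a : ι → κ → ℝ) (u v : ι → ℝ) : likelihood a u v = likelihood a v u := by
  simp only [likelihood, mul_comm (u _) (v _)]

lemma likelihood_smul_left (a : ι → κ → ℝ) (c : ℝ) (u v : ι → ℝ) :
    likelihood a (c • u) v = c ^ Fintype.card κ * likelihood a u v := by
  simp only [likelihood, Pi.smul_apply, smul_eq_mul, mul_assoc, ← mul_sum, prod_mul_distrib,
    prod_const, card_univ]

lemma likelihood_zero_left [Nonempty κ] (a : ι → κ → ℝ) (v : ι → ℝ) : likelihood a 0 v = 0 := by
  simpa using likelihood_smul_left a 0 0 v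

lemma likelihood_update_zero_row [DecidableEq ι] {a : ι → κ → ℝ} {k : ι} (hk : ∀ j, a k j = 0)
    (u v : ι → ℝ) : likelihood a (Function.update u k 0) v = likelihood a u v := by
  refine prod_congr rfl fun j _ => sum_congr rfl fun i _ => ?_
  rcases eq_or_ne i k with rfl | hik
  · simp [hk]
  · rw [Function.update_of_ne hik]

lemma exists_pos_sum_sq_eq [Nonempty ι] {r : ℝ} (hr : 0 < r) :
    ∃ w : ι → ℝ, (∀ i, 0 < w i) ∧ ∑ i, w i ^ 2 = r := by
  have hcard : (0 : ℝ) < Fintype.card ι := by exact_mod_cast Fintype.card_pos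
  refine ⟨fun _ => √(r / Fintype.card ι), fun _ => by positivity, ?_⟩
  rw [sum_const, card_univ, Real.sq_sqrt (by positivity), nsmul_eq_mul]
  field_simp

lemma likelihood_self_pos {a : ι → κ → ℝ} (ha : ∀ i j, 0 ≤ a i j) (hcol : ∀ j, ∃ i, 0 < a i j)
    {w : ι → ℝ} (hw : ∀ i, 0 < w i) : 0 < likelihood a w w := by
  refine prod_pos fun j _ => ?_
  obtain ⟨i, hi⟩ := hcol j
  exact sum_pos' (fun i _ => mul_nonneg (mul_self_nonneg _) (ha i j))
    ⟨i, mem_univ i, mul_pos (mul_pos (hw i) (hw i)) hi⟩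

lemma sum_mul_pos_of_likelihood_pos {a : ι → κ → ℝ} (ha : ∀ i j, 0 ≤ a i j) {u v : ι → ℝ}
    (hu : ∀ i, 0 ≤ u i) (hv : ∀ i, 0 ≤ v i) (h : 0 < likelihood a u v) (j : κ) :
    0 < ∑ i, u i * v i * a i j :=
  (sum_nonneg fun i _ => mul_nonneg (mul_nonneg (hu i) (hv i)) (ha i j)).lt_of_ne'
    (prod_ne_zero_iff.mp h.ne' j (mem_univ j))

/-- Otherwise rescaling `u'` onto the sphere would beat the maximum, `likelihood` being
homogeneous of degree `card κ` in its first vector. -/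
lemma le_sum_sq_of_likelihood_le [Nonempty κ] {a : ι → κ → ℝ} {r : ℝ} {u v u' : ι → ℝ}
    (hmax : ∀ u', (∀ i, 0 ≤ u' i) → ∑ i, u' i ^ 2 = r → likelihood a u' v ≤ likelihood a u v)
    (hpos : 0 < likelihood a u v) (hu' : ∀ i, 0 ≤ u' i)
    (hle : likelihood a u v ≤ likelihood a u' v) :
    r ≤ ∑ i, u' i ^ 2 := by
  set s := ∑ i, u' i ^ 2
  have hs : 0 < s := by
    refine (sum_nonneg fun i _ => sq_nonneg (u' i)).lt_of_ne fun hs => hpos.not_ge ?_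
    have hu'0 : u' = 0 := funext fun i =>
      pow_eq_zero_iff two_ne_zero |>.mp <| (sum_eq_zero_iff_of_nonneg fun i _ =>
        sq_nonneg (u' i)).mp hs.symm i (mem_univ i)
    simpa [hu'0, likelihood_zero_left] using hle
  by_contra! hsr
  have hc : 1 < √(r / s) := Real.lt_sqrt_of_sq_lt (by rw [one_pow, one_lt_div hs]; exact hsr)
  have hscaled : ∑ i, (√(r / s) • u') i ^ 2 = r := by
    simp only [Pi.smul_apply, smul_eq_mul, mul_pow, ← mul_sum,
      Real.sq_sqrt (div_pos (hs.trans hsr) hs).le]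
    exact div_mul_cancel₀ r hs.ne'
  have hgrow : likelihood a u' v < likelihood a (√(r / s) • u') v := by
    rw [likelihood_smul_left]
    exact lt_mul_left (hpos.trans_le hle) (one_lt_pow₀ hc Fintype.card_ne_zero)
  exact (hle.trans_lt hgrow).not_ge
    (hmax _ (fun i => smul_nonneg (Real.sqrt_nonneg _) (hu' i)) hscaled)

lemma eq_zero_of_row_eq_zero [Nonempty κ] {a : ι → κ → ℝ} {r : ℝ} {u v : ι → ℝ} {k : ι}
    (hk : ∀ j, a k j = 0) (hu : ∀ i, 0 ≤ u i) (hus : ∑ i, u i ^ 2 = r)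
    (hmax : ∀ u', (∀ i, 0 ≤ u' i) → ∑ i, u' i ^ 2 = r → likelihood a u' v ≤ likelihood a u v)
    (hpos : 0 < likelihood a u v) : u k = 0 := by
  classical
  have hdrop := le_sum_sq_of_likelihood_le hmax hpos (u' := Function.update u k 0)
    (fun i => by rcases eq_or_ne i k with rfl | hik <;> simp [*])
    (likelihood_update_zero_row hk u v).ge
  have hsplit : ∑ i, u i ^ 2 = ∑ i, Function.update u k 0 i ^ 2 + u k ^ 2 := by
    simp [Function.update_apply, Finset.sum_ite, Finset.filter_ne']
  exact pow_eq_zero_iff two_ne_zero |>.mp (le_antisymm (by linarith) (sq_nonneg (u k)))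

noncomputable def quadMean (x y : ℝ) : ℝ := √((x ^ 2 + y ^ 2) / 2)

lemma quadMean_nonneg (x y : ℝ) : 0 ≤ quadMean x y := Real.sqrt_nonneg _

lemma quadMean_sq (x y : ℝ) : quadMean x y ^ 2 = (x ^ 2 + y ^ 2) / 2 :=
  Real.sq_sqrt (by positivity)

lemma mul_le_quadMean_sq (x y : ℝ) : x * y ≤ quadMean x y ^ 2 := by
  rw [quadMean_sq]; linarith [two_mul_le_add_sq x y]

lemma mul_lt_quadMean_sq {x y : ℝ} (h : x ≠ y) : x * y < quadMean x y ^ 2 := by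
  rw [quadMean_sq]; nlinarith [sq_pos_of_ne_zero (sub_ne_zero.mpr h)]

lemma sum_quadMean_sq {r : ℝ} {u v : ι → ℝ} (hus : ∑ i, u i ^ 2 = r) (hvs : ∑ i, v i ^ 2 = r) :
    ∑ i, quadMean (u i) (v i) ^ 2 = r := by
  simp only [quadMean_sq, ← sum_div, sum_add_distrib, hus, hvs]; ring

lemma likelihood_lt_likelihood_quadMean {a : ι → κ → ℝ} (ha : ∀ i j, 0 ≤ a i j) {u v : ι → ℝ}
    (hu : ∀ i, 0 ≤ u i) (hv : ∀ i, 0 ≤ v i) (hpos : 0 < likelihood a u v) {k : ι} {j : κ}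
    (hkj : 0 < a k j) (hne : u k ≠ v k) :
    likelihood a u v <
      likelihood a (fun i => quadMean (u i) (v i)) (fun i => quadMean (u i) (v i)) := by
  simp only [likelihood, ← sq]
  refine prod_lt_prod (fun j _ => sum_mul_pos_of_likelihood_pos ha hu hv hpos j)
    (fun j _ => sum_le_sum fun i _ => mul_le_mul_of_nonneg_right (mul_le_quadMean_sq _ _) (ha i j))
    ⟨j, mem_univ j, sum_lt_sum
      (fun i _ => mul_le_mul_of_nonneg_right (mul_le_quadMean_sq _ _) (ha i j))
      ⟨k, mem_univ k, mul_lt_mul_of_pos_right (mul_lt_quadMean_sq hne) hkj⟩⟩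

end

theorem stmt_0_general (n m : ℕ) (hm : 1 ≤ m)
    (a : Fin n → Fin m → ℝ) (ha : ∀ i j, 0 ≤ a i j)
    (hcol : ∀ j, ∃ i, 0 < a i j) (r : ℝ) (hr : 0 < r)
    (u v : Fin n → ℝ) (hu : ∀ i, 0 ≤ u i) (hv : ∀ i, 0 ≤ v i)
    (hus : ∑ i, (u i) ^ 2 = r) (hvs : ∑ i, (v i) ^ 2 = r)
    (hmax : ∀ u' v' : Fin n → ℝ, (∀ i, 0 ≤ u' i) → (∀ i, 0 ≤ v' i) →
      (∑ i, (u' i) ^ 2 = r) → (∑ i, (v' i) ^ 2 = r) →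
      (∏ j, ∑ i, u' i * v' i * a i j) ≤ ∏ j, ∑ i, u i * v i * a i j) :
    ∀ i, u i = v i := by
  intro k
  have : Nonempty (Fin n) := ⟨k⟩
  have : Nonempty (Fin m) := ⟨⟨0, hm⟩⟩
  obtain ⟨w, hw, hws⟩ := exists_pos_sum_sq_eq (ι := Fin n) hr
  have hpos : 0 < likelihood a u v := (likelihood_self_pos ha hcol hw).trans_le
    (hmax w w (fun i => (hw i).le) (fun i => (hw i).le) hws hws)
  by_cases hk : ∃ j, 0 < a k j
  · obtain ⟨j, hkj⟩ := hk
    by_contra hne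
    have hq := sum_quadMean_sq hus hvs
    exact (likelihood_lt_likelihood_quadMean ha hu hv hpos hkj hne).not_ge
      (hmax _ _ (fun i => quadMean_nonneg _ _) (fun i => quadMean_nonneg _ _) hq hq)
  · have hk0 : ∀ j, a k j = 0 := fun j => (not_lt.mp (not_exists.mp hk j)).antisymm (ha k j)
    have hmax_v : ∀ v', (∀ i, 0 ≤ v' i) → ∑ i, v' i ^ 2 = r →
        likelihood a v' u ≤ likelihood a v u := fun v' hv' hvs' => by
      rw [likelihood_comm a v', likelihood_comm a v]
      exact hmax u v' hu hv' hus hvs'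
    rw [eq_zero_of_row_eq_zero hk0 hu hus (fun u' hu' hus' => hmax u' v hu' hv hus' hvs) hpos,
      eq_zero_of_row_eq_zero hk0 hv hvs hmax_v (likelihood_comm a u v ▸ hpos)]

/-- Theorem 1: a maximizer (u, v) of the two-variable likelihood over the product
of spheres (with nonnegative coordinates) must satisfy u = v. -/
theorem stmt_0 (n m : ℕ) (hn : 1 ≤ n) (hm : 1 ≤ m)
    (a : Fin n → Fin m → ℝ) (ha : ∀ i j, 0 ≤ a i j)
    (hcol : ∀ j, ∃ i, 0 < a i j) (r : ℝ) (hr : 0 < r)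
    (u v : Fin n → ℝ) (hu : ∀ i, 0 ≤ u i) (hv : ∀ i, 0 ≤ v i)
    (hus : ∑ i, (u i) ^ 2 = r) (hvs : ∑ i, (v i) ^ 2 = r)
    (hmax : ∀ u' v' : Fin n → ℝ, (∀ i, 0 ≤ u' i) → (∀ i, 0 ≤ v' i) →
      (∑ i, (u' i) ^ 2 = r) → (∑ i, (v' i) ^ 2 = r) →
      (∏ j, ∑ i, u' i * v' i * a i j) ≤ ∏ j, ∑ i, u i * v i * a i j) :
    ∀ i, u i = v i :=
  stmt_0_general n m hm a ha hcol r hr u v hu hv hus hvs hmax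
end

section
/- Let a be an n×m real matrix, r > 0, c ∈ ℝⁿ with ∑_{k=1}^n c_k² = r, set l_j = ∑_{i=1}^n c_i² a_{ij} and l = ∏_{j=1}^m l_j, and assume l_j ≠ 0 for every j. If λ ∈ ℝ satisfies l·∑_{j=1}^m a_{kj} c_k / l_j − λ c_k = 0 for every k, then for each k either c_k = 0 or ∑_{j=1}^m a_{kj} r/(m l_j) = 1. -/
/-!
Multiplying the `k`-th stationarity equation by `c_k` and summing over `k` gives `l·m = λ·r`,
because `∑_k c_k² ∑_j a_{kj} / l_j = ∑_j l_j / l_j = m`. For `c_k ≠ 0` the `k`-th equation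
reads `l · ∑_j a_{kj} / l_j = λ`, hence `∑_j a_{kj} / l_j = λ / l = m / r`.
-/

open Finset

variable {ι κ K : Type*} [Fintype ι] [Fintype κ] [Field K]

theorem sum_mul_sum_div_weightedSum_eq_card (w : ι → K) (a : ι → κ → K)
    (hl : ∀ j, ∑ i, w i * a i j ≠ 0) :
    ∑ k, w k * ∑ j, a k j / ∑ i, w i * a i j = Fintype.card κ := by
  calc ∑ k, w k * ∑ j, a k j / ∑ i, w i * a i j
      = ∑ j, (∑ k, w k * a k j) / ∑ i, w i * a i j := by
        simp only [mul_sum, sum_div]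
        rw [sum_comm]
        exact sum_congr rfl fun _ _ => sum_congr rfl fun _ _ => by ring
    _ = Fintype.card κ := by simp [div_self (hl _)]

theorem mul_sum_sq_mul_eq_of_stationary (c s : ι → K) (l lam : K)
    (h : ∀ k, l * (s k * c k) = lam * c k) :
    l * ∑ k, c k ^ 2 * s k = lam * ∑ k, c k ^ 2 := by
  simp only [mul_sum]
  exact sum_congr rfl fun k _ => by linear_combination c k * h k

/-- From the Lagrange stationarity equations: for each k, either c_k = 0 or
∑_j a_{kj} r/(m l_j) = 1. -/
theorem stmt_3 (n m : ℕ) (hm : 1 ≤ m) (a : Fin n → Fin m → ℝ) (r : ℝ) (hr : 0 < r)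
    (c : Fin n → ℝ) (hc : ∑ k, (c k) ^ 2 = r)
    (hl : ∀ j, (∑ i, (c i) ^ 2 * a i j) ≠ 0) (lam : ℝ)
    (hstat : ∀ k, (∏ j, ∑ i, (c i) ^ 2 * a i j) *
        (∑ j, a k j * c k / (∑ i, (c i) ^ 2 * a i j)) - lam * c k = 0) :
    ∀ k, c k = 0 ∨ (∑ j, a k j * r / ((m : ℝ) * (∑ i, (c i) ^ 2 * a i j))) = 1 := by
  set L : Fin m → ℝ := fun j => ∑ i, c i ^ 2 * a i j
  set l : ℝ := ∏ j, L j
  set s : Fin n → ℝ := fun k => ∑ j, a k j / L j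
  have hl0 : l ≠ 0 := prod_ne_zero_iff.mpr fun j _ => hl j
  have hm0 : (m : ℝ) ≠ 0 := Nat.cast_ne_zero.mpr (by omega)
  have hstat' : ∀ k, l * (s k * c k) = lam * c k := fun k => by
    rw [sum_mul]
    simp only [div_mul_eq_mul_div]
    linear_combination hstat k
  have hlam : l * m = lam * r := by
    have := mul_sum_sq_mul_eq_of_stationary c s l lam hstat'
    rwa [sum_mul_sum_div_weightedSum_eq_card _ _ hl, Fintype.card_fin, hc] at this
  intro k
  refine or_iff_not_imp_left.mpr fun hck => ?_
  have hsk : l * s k = lam := mul_right_cancel₀ hck (by rw [mul_assoc]; exact hstat' k)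
  calc ∑ j, a k j * r / (m * L j) = r / (m * l) * (l * s k) := by
        rw [mul_sum, mul_sum]
        exact sum_congr rfl fun j _ => by field_simp
    _ = 1 := by rw [hsk]; field_simp; linear_combination -hlam
end

section
/- Let e be a symmetric m×m real matrix with e_{ij} ≥ 0 for all i,j, e_{ii} > 0 for all i, and row sums ∑_{j=1}^m e_{ij} = 1 for every i. If β ∈ ℝ^m has β_i > 0 for all i and satisfies ∑_{j=1}^m e_{ij} β_i β_j = 1 for every i, then β_i = 1 for every i. (Core of Theorem 2) -/
/-!
Row `i` of the system says that the `e i ·`-weighted average of `β` equals `(β i)⁻¹`.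
Comparing the rows of a maximal and a minimal entry gives `β_max⁻¹ = β_min`. Then the
average in the row of the maximum equals the minimum, which forces every entry with
positive weight, in particular (positive diagonal) `β_max` itself, to equal `β_min`.
So `β` is constant, and its constant value `c > 0` satisfies `c * c = 1`.
-/

open Finset

section WeightedAverage

variable {ι : Type*} [Fintype ι] {w x : ι → ℝ} {a : ℝ}

theorem le_sum_mul_of_forall_le (hw : ∀ j, 0 ≤ w j) (hw1 : ∑ j, w j = 1)
    (hx : ∀ j, a ≤ x j) : a ≤ ∑ j, w j * x j :=
  calc a = ∑ j, w j * a := by rw [← sum_mul, hw1, one_mul]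
    _ ≤ ∑ j, w j * x j := sum_le_sum fun j _ => mul_le_mul_of_nonneg_left (hx j) (hw j)

theorem sum_mul_le_of_forall_le (hw : ∀ j, 0 ≤ w j) (hw1 : ∑ j, w j = 1)
    (hx : ∀ j, x j ≤ a) : ∑ j, w j * x j ≤ a :=
  calc ∑ j, w j * x j ≤ ∑ j, w j * a :=
        sum_le_sum fun j _ => mul_le_mul_of_nonneg_left (hx j) (hw j)
    _ = a := by rw [← sum_mul, hw1, one_mul]

theorem eq_of_sum_mul_eq_of_forall_le (hw : ∀ j, 0 ≤ w j) (hw1 : ∑ j, w j = 1)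
    (hx : ∀ j, a ≤ x j) (hsum : ∑ j, w j * x j = a) {k : ι} (hk : 0 < w k) : x k = a := by
  have hzero : ∑ j, w j * (x j - a) = 0 := by
    simp only [mul_sub, sum_sub_distrib, ← sum_mul, hw1, one_mul, hsum, sub_self]
  have hterm := (sum_eq_zero_iff_of_nonneg fun j _ =>
    mul_nonneg (hw j) (sub_nonneg.mpr (hx j))).mp hzero k (mem_univ k)
  linarith [(mul_eq_zero.mp hterm).resolve_left hk.ne']

end WeightedAverage

theorem sum_mul_eq_inv_of_sum_mul_mul_eq_one {ι : Type*} [Fintype ι] {w β : ι → ℝ} {b : ℝ}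
    (h : ∑ j, w j * b * β j = 1) : ∑ j, w j * β j = b⁻¹ := by
  refine eq_inv_of_mul_eq_one_right ?_
  rw [mul_sum, ← h]
  exact sum_congr rfl fun j _ => by ring

theorem stmt_7_general (m : ℕ) (e : Fin m → Fin m → ℝ)
    (hnn : ∀ i j, 0 ≤ e i j)
    (hdiag : ∀ i, 0 < e i i) (hrow : ∀ i, ∑ j, e i j = 1)
    (β : Fin m → ℝ) (hβ : ∀ i, 0 < β i)
    (heq : ∀ i, ∑ j, e i j * β i * β j = 1) :
    ∀ i, β i = 1 := by
  intro k
  have : Nonempty (Fin m) := ⟨k⟩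
  obtain ⟨i, hmax⟩ := Finite.exists_max β
  obtain ⟨l, hmin⟩ := Finite.exists_min β
  have hav : ∀ r, ∑ j, e r j * β j = (β r)⁻¹ :=
    fun r => sum_mul_eq_inv_of_sum_mul_mul_eq_one (heq r)
  have hrow_max : β l ≤ (β i)⁻¹ := hav i ▸ le_sum_mul_of_forall_le (hnn i) (hrow i) hmin
  have hrow_min : (β l)⁻¹ ≤ β i := hav l ▸ sum_mul_le_of_forall_le (hnn l) (hrow l) hmax
  have hinv : (β i)⁻¹ = β l :=
    le_antisymm ((inv_le_comm₀ (hβ l) (hβ i)).mp hrow_min) hrow_max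
  have hconst : β i = β l :=
    eq_of_sum_mul_eq_of_forall_le (hnn i) (hrow i) hmin (by rw [hav i, hinv]) (hdiag i)
  have hone : β i = 1 := by
    rw [← hconst] at hinv
    nlinarith [hβ i, mul_inv_cancel₀ (hβ i).ne']
  linarith [hmin k, hmax k]

/-- Core of Theorem 2: for a symmetric nonnegative matrix e with positive diagonal
and row sums 1, the only positive solution β of ∑_j e_{ij} β_i β_j = 1 is β ≡ 1. -/
theorem stmt_7 (m : ℕ) (e : Fin m → Fin m → ℝ)
    (hsym : ∀ i j, e i j = e j i) (hnn : ∀ i j, 0 ≤ e i j)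
    (hdiag : ∀ i, 0 < e i i) (hrow : ∀ i, ∑ j, e i j = 1)
    (β : Fin m → ℝ) (hβ : ∀ i, 0 < β i)
    (heq : ∀ i, ∑ j, e i j * β i * β j = 1) :
    ∀ i, β i = 1 :=
  stmt_7_general m e hnn hdiag hrow β hβ heq
end

section
/- Let b_1, …, b_m be nonzero vectors in ℝⁿ with nonnegative components, r > 0, and D_{ij} = (r/m)(b_i · b_j). If α and α′ in ℝ^m both have strictly positive components and both satisfy ∑_{j=1}^m D_{kj} α_k α_j = 1 and ∑_{j=1}^m D_{kj} α′_k α′_j = 1 for every k = 1,…,m, then α = α′. (Theorem 2: the positive solution of the quadratic system is unique) -/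
/-!
The matrix `D = (r/m) B Bᵀ` is positive semidefinite, and a positive solution satisfies
`D α = α⁻¹` componentwise. For two solutions this gives
`0 ≤ (α - α')ᵀ D (α - α') = ∑ₖ (αₖ - α'ₖ)(αₖ⁻¹ - α'ₖ⁻¹) = -∑ₖ (αₖ - α'ₖ)² / (αₖ α'ₖ) ≤ 0`.
-/

open Matrix

lemma sub_mul_inv_sub_inv_of_pos {a b : ℝ} (ha : 0 < a) (hb : 0 < b) :
    (a - b) * (a⁻¹ - b⁻¹) = -((a - b) ^ 2 / (a * b)) := by
  field_simp
  ring

theorem Matrix.PosSemidef.eq_of_mul_mulVec_eq_one {ι : Type*} [Fintype ι] {A : Matrix ι ι ℝ}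
    (hA : A.PosSemidef) {α α' : ι → ℝ} (hα : ∀ k, 0 < α k) (hα' : ∀ k, 0 < α' k)
    (h : ∀ k, α k * (A *ᵥ α) k = 1) (h' : ∀ k, α' k * (A *ᵥ α') k = 1) : α = α' := by
  have hinv : ∀ k, (A *ᵥ α) k = (α k)⁻¹ := fun k => eq_inv_of_mul_eq_one_right (h k)
  have hinv' : ∀ k, (A *ᵥ α') k = (α' k)⁻¹ := fun k => eq_inv_of_mul_eq_one_right (h' k)
  have hterm : ∀ k, (α k - α' k) * ((α k)⁻¹ - (α' k)⁻¹) ≤ 0 := fun k => by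
    rw [sub_mul_inv_sub_inv_of_pos (hα k) (hα' k), neg_nonpos]
    exact div_nonneg (sq_nonneg _) (mul_pos (hα k) (hα' k)).le
  have hform : 0 ≤ ∑ k, (α k - α' k) * ((α k)⁻¹ - (α' k)⁻¹) := by
    simpa [mulVec_sub, hinv, hinv', dotProduct] using hA.dotProduct_mulVec_nonneg (α - α')
  funext k
  have hzero := (Finset.sum_eq_zero_iff_of_nonpos fun k _ => hterm k).mp
    (le_antisymm (Finset.sum_nonpos fun k _ => hterm k) hform) k (Finset.mem_univ k)
  rw [sub_mul_inv_sub_inv_of_pos (hα k) (hα' k), neg_eq_zero,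
    div_eq_zero_iff, or_iff_left (mul_pos (hα k) (hα' k)).ne'] at hzero
  exact sub_eq_zero.mp (pow_eq_zero_iff two_ne_zero |>.mp hzero)

theorem Matrix.PosSemidef.eq_of_sum_mul_mul_eq_one {ι : Type*} [Fintype ι]
    {A : Matrix ι ι ℝ} (hA : A.PosSemidef) {α α' : ι → ℝ} (hα : ∀ k, 0 < α k)
    (hα' : ∀ k, 0 < α' k) (h : ∀ k, ∑ j, A k j * α k * α j = 1)
    (h' : ∀ k, ∑ j, A k j * α' k * α' j = 1) : α = α' := by
  have hmulVec (β : ι → ℝ) (k : ι) : ∑ j, A k j * β k * β j = β k * (A *ᵥ β) k := by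
    simp only [mulVec, dotProduct, Finset.mul_sum]
    exact Finset.sum_congr rfl fun j _ => by ring
  exact hA.eq_of_mul_mulVec_eq_one hα hα' (fun k => hmulVec α k ▸ h k)
    (fun k => hmulVec α' k ▸ h' k)

theorem stmt_8_general (m n : ℕ) (b : Fin m → Fin n → ℝ)
    (r : ℝ) (hr : 0 < r)
    (α α' : Fin m → ℝ) (hα : ∀ k, 0 < α k) (hα' : ∀ k, 0 < α' k)
    (heq : ∀ k, ∑ j, (r / (m : ℝ) * ∑ t, b k t * b j t) * α k * α j = 1)
    (heq' : ∀ k, ∑ j, (r / (m : ℝ) * ∑ t, b k t * b j t) * α' k * α' j = 1) :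
    α = α' := by
  have hD : ((r / m) • (of b * (of b)ᵀ)).PosSemidef :=
    (posSemidef_self_mul_conjTranspose (of b)).smul (by positivity)
  exact hD.eq_of_sum_mul_mul_eq_one hα hα' heq heq'

/-- Theorem 2: the positive solution of the quadratic system
∑_j D_{kj} α_k α_j = 1, with D_{ij} = (r/m)(b_i · b_j) for nonzero nonnegative
vectors b_j, is unique. -/
theorem stmt_8 (m n : ℕ) (hm : 1 ≤ m) (b : Fin m → Fin n → ℝ)
    (hbne : ∀ j, b j ≠ 0) (hbnn : ∀ j i, 0 ≤ b j i) (r : ℝ) (hr : 0 < r)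
    (α α' : Fin m → ℝ) (hα : ∀ k, 0 < α k) (hα' : ∀ k, 0 < α' k)
    (heq : ∀ k, ∑ j, (r / (m : ℝ) * ∑ t, b k t * b j t) * α k * α j = 1)
    (heq' : ∀ k, ∑ j, (r / (m : ℝ) * ∑ t, b k t * b j t) * α' k * α' j = 1) :
    α = α' :=
  stmt_8_general m n b r hr α α' hα hα' heq heq'
end

section
/- Let b_1, …, b_m be nonzero vectors in ℝⁿ with nonnegative components and r > 0. If u and u′ in ℝⁿ satisfy u · b_j > 0 and u′ · b_j > 0 for every j, u = (r/m)·∑_{j=1}^m b_j/(u · b_j), and u′ = (r/m)·∑_{j=1}^m b_j/(u′ · b_j), then u = u′. (Theorem 3: the solution of the stationarity equations is unique, so the maximum found is the global maximum on the sphere ∑_i u_i² = r) -/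
/-!
Pairing the fixed-point equation of `w` with an arbitrary `v` gives
`v ⬝ᵥ w = (r/m) ∑ⱼ (v ⬝ᵥ bⱼ)/(w ⬝ᵥ bⱼ)`. Expanding `|u - u'|²` this way, the `j`-th
term is `2 - xⱼ - 1/xⱼ` with `xⱼ = (u ⬝ᵥ bⱼ)/(u' ⬝ᵥ bⱼ) > 0`, which is `≤ 0` by AM-GM;
hence `u = u'`.
-/

open Matrix Finset

lemma two_le_div_add_div {a b : ℝ} (ha : 0 < a) (hb : 0 < b) : 2 ≤ a / b + b / a := by
  rw [div_add_div _ _ hb.ne' ha.ne', le_div_iff₀ (by positivity)]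
  nlinarith [sq_nonneg (a - b)]

section FixedPoint

variable {ι κ : Type*} [Fintype ι] [Fintype κ]

lemma dotProduct_eq_of_fixedPoint (b : ι → κ → ℝ) (c : ℝ) (T : ι → ℝ)
    {w : κ → ℝ} (hw : ∀ i, w i = c * ∑ j, b j i / T j) (v : κ → ℝ) :
    v ⬝ᵥ w = c * ∑ j, v ⬝ᵥ b j / T j := by
  have hw' : w = c • ∑ j, (T j)⁻¹ • b j := by
    ext i
    simp [hw i, Finset.sum_apply, div_eq_inv_mul]
  simp [hw', dotProduct_sum, dotProduct_smul, div_eq_inv_mul]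

theorem eq_of_fixedPoint (b : ι → κ → ℝ) {c : ℝ} (hc : 0 ≤ c) {u u' : κ → ℝ}
    (hub : ∀ j, 0 < u ⬝ᵥ b j) (hub' : ∀ j, 0 < u' ⬝ᵥ b j)
    (hfix : ∀ i, u i = c * ∑ j, b j i / u ⬝ᵥ b j)
    (hfix' : ∀ i, u' i = c * ∑ j, b j i / u' ⬝ᵥ b j) :
    u = u' := by
  have pair := dotProduct_eq_of_fixedPoint b c (fun j ↦ u ⬝ᵥ b j) hfix
  have pair' := dotProduct_eq_of_fixedPoint b c (fun j ↦ u' ⬝ᵥ b j) hfix'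
  have hnonpos : (u - u') ⬝ᵥ (u - u') ≤ 0 :=
    calc (u - u') ⬝ᵥ (u - u') = u ⬝ᵥ u + u' ⬝ᵥ u' - u ⬝ᵥ u' - u' ⬝ᵥ u := by
          simp only [sub_dotProduct, dotProduct_sub, dotProduct_comm u' u]
          ring
      _ = c * ∑ j, (2 - (u ⬝ᵥ b j / u' ⬝ᵥ b j + u' ⬝ᵥ b j / u ⬝ᵥ b j)) := by
          rw [pair u, pair u', pair' u, pair' u', ← mul_add, ← mul_sub, ← mul_sub,
            ← sum_add_distrib, ← sum_sub_distrib, ← sum_sub_distrib]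
          congr 1
          refine sum_congr rfl fun j _ ↦ ?_
          rw [div_self (hub j).ne', div_self (hub' j).ne']
          ring
      _ ≤ 0 := mul_nonpos_of_nonneg_of_nonpos hc <| sum_nonpos fun j _ ↦
          sub_nonpos.mpr (two_le_div_add_div (hub j) (hub' j))
  exact sub_eq_zero.mp (dotProduct_self_eq_zero.mp (le_antisymm hnonpos
    (sum_nonneg fun _ _ ↦ mul_self_nonneg _)))

end FixedPoint

theorem stmt_9_general (m n : ℕ) (b : Fin m → Fin n → ℝ)
    (r : ℝ) (hr : 0 < r)
    (u u' : Fin n → ℝ)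
    (hub : ∀ j, 0 < ∑ t, u t * b j t) (hub' : ∀ j, 0 < ∑ t, u' t * b j t)
    (hfix : ∀ i, u i = (r / (m : ℝ)) * ∑ j, b j i / (∑ t, u t * b j t))
    (hfix' : ∀ i, u' i = (r / (m : ℝ)) * ∑ j, b j i / (∑ t, u' t * b j t)) :
    u = u' :=
  eq_of_fixedPoint b (by positivity) hub hub' hfix hfix'

/-- Theorem 3: the solution of the stationarity (fixed-point) equations
u = (r/m)·∑_j b_j/(u·b_j) with all u·b_j > 0 is unique. -/
theorem stmt_9 (m n : ℕ) (hm : 1 ≤ m) (b : Fin m → Fin n → ℝ)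
    (hbne : ∀ j, b j ≠ 0) (hbnn : ∀ j i, 0 ≤ b j i) (r : ℝ) (hr : 0 < r)
    (u u' : Fin n → ℝ)
    (hub : ∀ j, 0 < ∑ t, u t * b j t) (hub' : ∀ j, 0 < ∑ t, u' t * b j t)
    (hfix : ∀ i, u i = (r / (m : ℝ)) * ∑ j, b j i / (∑ t, u t * b j t))
    (hfix' : ∀ i, u' i = (r / (m : ℝ)) * ∑ j, b j i / (∑ t, u' t * b j t)) :
    u = u' :=
  stmt_9_general m n b r hr u u' hub hub' hfix hfix'
end

section
/- Let D be a symmetric m×m real matrix with D_{ij} ≥ 0 for all i,j and D_{ii} > 0 for all i, let α ∈ ℝ^m have α_i > 0 for all i, and fix an index k. Let α′ agree with α in all coordinates except the k-th, where α′_k > 0 satisfies D_{kk} α′_k² + (∑_{i≠k} D_{ik} α_i) α′_k − 1 = 0. Then E(α′) + |α′_k − α_k|·D_{kk}·α_k ≤ E(α), where E(γ) = ∑_{i=1}^m |∑_{j=1}^m D_{ij} γ_i γ_j − 1|. In particular each coordinate update of the iteration does not increase the total error E. (Core of Lemma 3) -/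
/-!
Write `δ = α'_k - α_k` and `S = ∑_{i ≠ k} D_ik α_i`. Each error `E_i` with `i ≠ k` moves by
`D_ik α_i δ`, so these errors grow by at most `S |δ|` in total. Since `α'_k` solves the `k`-th
quadratic, `E_k(α') = 0`, and subtracting that equation factors the old error as
`E_k(α) = (α_k - α'_k) (D_kk (α_k + α'_k) + S)`. Its absolute value
`|δ| (D_kk (α_k + α'_k) + S)` pays for the `S |δ|` and leaves at least `|δ| D_kk α_k`.
-/

open Finset

section Algebra

variable {ι R : Type*} [Fintype ι] [CommRing R]

def coordError (D : ι → ι → R) (γ : ι → R) (i : ι) : R :=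
  ∑ j, D i j * γ i * γ j - 1

theorem coordError_of_ne {D : ι → ι → R} {γ γ' : ι → R} {i k : ι}
    (hagree : ∀ j, j ≠ k → γ' j = γ j) (hik : i ≠ k) :
    coordError D γ' i = coordError D γ i + D i k * γ i * (γ' k - γ k) := by
  have hdiff : ∑ j, D i j * γ i * (γ' j - γ j) = D i k * γ i * (γ' k - γ k) :=
    sum_eq_single k (fun j _ hjk => by rw [hagree j hjk, sub_self, mul_zero])
      (fun h => absurd (mem_univ k) h)
  rw [← hdiff, coordError, coordError, hagree i hik]
  simp only [mul_sub, sum_sub_distrib]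
  ring

variable [DecidableEq ι]

theorem coordError_self {D : ι → ι → R} (γ : ι → R) {k : ι} (hsym : ∀ j, D k j = D j k) :
    coordError D γ k = D k k * γ k ^ 2 + (∑ j ∈ univ.erase k, D j k * γ j) * γ k - 1 := by
  have hrow : ∀ j, D k j * γ k * γ j = D j k * γ j * γ k := fun j => by rw [hsym]; ring
  rw [coordError, ← sum_erase_add _ _ (mem_univ k), sum_mul, sum_congr rfl fun j _ => hrow j]
  ring

variable {D : ι → ι → R} {γ γ' : ι → R} {k : ι}

theorem coordError_self_eq_zero_of_root (hsym : ∀ j, D k j = D j k)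
    (hagree : ∀ j, j ≠ k → γ' j = γ j)
    (hroot : D k k * γ' k ^ 2 + (∑ i ∈ univ.erase k, D i k * γ i) * γ' k - 1 = 0) :
    coordError D γ' k = 0 := by
  rw [coordError_self γ' hsym, ← hroot,
    sum_congr rfl fun j hj => by rw [hagree j (ne_of_mem_erase hj)]]

theorem coordError_self_eq_mul_of_root (hsym : ∀ j, D k j = D j k)
    (hroot : D k k * γ' k ^ 2 + (∑ i ∈ univ.erase k, D i k * γ i) * γ' k - 1 = 0) :
    coordError D γ k =
      (γ k - γ' k) * (D k k * (γ k + γ' k) + ∑ i ∈ univ.erase k, D i k * γ i) := by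
  rw [coordError_self γ hsym]
  linear_combination hroot

end Algebra

section Estimates

variable {ι : Type*} [Fintype ι] [DecidableEq ι] {D : ι → ι → ℝ} {γ γ' : ι → ℝ} {k : ι}

theorem sum_abs_coordError_erase_le (hnn : ∀ i, 0 ≤ D i k) (hγ : ∀ i, 0 ≤ γ i)
    (hagree : ∀ j, j ≠ k → γ' j = γ j) :
    ∑ i ∈ univ.erase k, |coordError D γ' i| ≤
      ∑ i ∈ univ.erase k, |coordError D γ i| +
        (∑ i ∈ univ.erase k, D i k * γ i) * |γ' k - γ k| := by
  rw [sum_mul, ← sum_add_distrib]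
  refine sum_le_sum fun i hi => ?_
  rw [coordError_of_ne hagree (ne_of_mem_erase hi)]
  calc |coordError D γ i + D i k * γ i * (γ' k - γ k)|
      ≤ |coordError D γ i| + |D i k * γ i * (γ' k - γ k)| := abs_add_le _ _
    _ = |coordError D γ i| + D i k * γ i * |γ' k - γ k| := by
      rw [abs_mul, abs_of_nonneg (mul_nonneg (hnn i) (hγ i))]

end Estimates

theorem stmt_14_general (m : ℕ) (D : Fin m → Fin m → ℝ)
    (hsym : ∀ i j, D i j = D j i) (hnn : ∀ i j, 0 ≤ D i j)
    (α : Fin m → ℝ) (hα : ∀ i, 0 < α i) (k : Fin m)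
    (α' : Fin m → ℝ) (hagree : ∀ i, i ≠ k → α' i = α i) (hpos : 0 < α' k)
    (hroot : D k k * (α' k) ^ 2 +
        (∑ i ∈ Finset.univ.erase k, D i k * α i) * α' k - 1 = 0) :
    (∑ i, |(∑ j, D i j * α' i * α' j) - 1|) + |α' k - α k| * D k k * α k ≤
      ∑ i, |(∑ j, D i j * α i * α j) - 1| := by
  change ∑ i, |coordError D α' i| + _ ≤ ∑ i, |coordError D α i|
  set S := ∑ i ∈ univ.erase k, D i k * α i
  have hS : 0 ≤ S := sum_nonneg fun i _ => mul_nonneg (hnn i k) (hα i).le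
  have hnew := coordError_self_eq_zero_of_root (hsym k) hagree hroot
  have hold : |coordError D α k| = |α' k - α k| * (D k k * (α k + α' k) + S) := by
    rw [coordError_self_eq_mul_of_root (hsym k) hroot, abs_mul, abs_sub_comm (α k),
      abs_of_nonneg (add_nonneg (mul_nonneg (hnn k k) (add_pos (hα k) hpos).le) hS)]
  have hrest := sum_abs_coordError_erase_le (fun i => hnn i k) (fun i => (hα i).le) hagree
  rw [← sum_erase_add _ _ (mem_univ k), ← sum_erase_add _ _ (mem_univ k), hnew, abs_zero, hold]
  nlinarith [mul_nonneg (mul_nonneg (abs_nonneg (α' k - α k)) (hnn k k)) hpos.le]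

/-- Core of Lemma 3: a coordinate update of the iteration (replacing α_k by the
positive root of the k-th quadratic equation) decreases the total error E by at
least |α′_k − α_k|·D_{kk}·α_k. -/
theorem stmt_14 (m : ℕ) (D : Fin m → Fin m → ℝ)
    (hsym : ∀ i j, D i j = D j i) (hnn : ∀ i j, 0 ≤ D i j)
    (hdiag : ∀ i, 0 < D i i)
    (α : Fin m → ℝ) (hα : ∀ i, 0 < α i) (k : Fin m)
    (α' : Fin m → ℝ) (hagree : ∀ i, i ≠ k → α' i = α i) (hpos : 0 < α' k)
    (hroot : D k k * (α' k) ^ 2 +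
        (∑ i ∈ Finset.univ.erase k, D i k * α i) * α' k - 1 = 0) :
    (∑ i, |(∑ j, D i j * α' i * α' j) - 1|) + |α' k - α k| * D k k * α k ≤
      ∑ i, |(∑ j, D i j * α i * α j) - 1| :=
  stmt_14_general m D hsym hnn α hα k α' hagree hpos hroot
end
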